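/- arXiv:1903.10618 — 5 statements merged into one kernel-verified Lean document; each statement's English description precedes it below -/
import Mathlib

section
/- Let ε > 0 and 0 < α < 1 be real numbers such that 2^k(1−α)^{2k} > (1+ε)/ε, and let T̃ = m·(1 − (1−α)^{2k})/(2^k − 1). Let E = exp(−(1−α)^{4k}·m/(4(1+ε)^2·2^k)). Then for φ drawn from D_R(m,n,k), with probability at least 1 − E, the number of assignments v with NumClausesUnSAT(φ, v) ≤ T̃ is less than E · 2^n. -/
open scoped Classical
open Finset

/-- An assignment of `n` Boolean variables. -/
abbrev Assignment (n : ℕ) := Fin n → Bool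

/-- A clause: an ordered `k`-tuple of literals, each a variable index together with a sign. -/
abbrev Clause (n k : ℕ) := Fin k → Fin n × Bool

/-- A formula: an ordered `m`-tuple of clauses. -/
abbrev Formula (n k m : ℕ) := Fin m → Clause n k

/-- An assignment satisfies a clause if it satisfies at least one literal of the clause. -/
def SatClause {n k : ℕ} (v : Assignment n) (c : Clause n k) : Prop :=
  ∃ i, v (c i).1 = (c i).2

/-- An assignment satisfies a formula if it satisfies every clause. -/
def SatFormula {n k m : ℕ} (v : Assignment n) (φ : Formula n k m) : Prop :=
  ∀ j, SatClause v (φ j)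

/-- The number of clauses of `φ` satisfied by `v`. -/
noncomputable def numSat {n k m : ℕ} (φ : Formula n k m) (v : Assignment n) : ℕ :=
  (Finset.univ.filter fun j => SatClause v (φ j)).card

/-- The number of clauses of `φ` left unsatisfied by `v`. -/
noncomputable def numUnsat {n k m : ℕ} (φ : Formula n k m) (v : Assignment n) : ℕ :=
  (Finset.univ.filter fun j => ¬ SatClause v (φ j)).card

lemma quad_le_exp {x : ℝ} (hx : 0 ≤ x) : 1 + x + x ^ 2 / 2 ≤ Real.exp x := by
  set f : ℝ → ℝ := fun y => Real.exp y - 1 - y - y ^ 2 / 2 with hf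
  have hderiv : ∀ y : ℝ, HasDerivAt f (Real.exp y - 1 - y) y := by
    intro y
    have h1 : HasDerivAt (fun y : ℝ => Real.exp y) (Real.exp y) y := Real.hasDerivAt_exp y
    have h2 : HasDerivAt (fun y : ℝ => y ^ 2 / 2) y y := by
      simpa using (hasDerivAt_pow 2 y).div_const 2
    exact ((h1.sub_const 1).sub (hasDerivAt_id y)).sub h2
  have hmono : MonotoneOn f (Set.Ici 0) := by
    apply monotoneOn_of_deriv_nonneg (convex_Ici 0)
    · exact fun y _ => ((hderiv y).differentiableAt).continuousAt.continuousWithinAt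
    · exact fun y _ => ((hderiv y).differentiableAt).differentiableWithinAt
    · intro y hy
      rw [(hderiv y).deriv]
      have := Real.add_one_le_exp y
      linarith
  have h0 : f 0 = 0 := by simp [hf]
  have := hmono Set.self_mem_Ici (Set.mem_Ici.2 hx) hx
  rw [h0] at this
  simp only [hf] at this
  linarith

lemma exp_neg_le_quad {x : ℝ} (hx : 0 ≤ x) : Real.exp (-x) ≤ 1 - x + x ^ 2 / 2 := by
  have h1 := quad_le_exp hx
  have h2 : (0:ℝ) < 1 + x + x ^ 2 / 2 := by nlinarith
  have h3 : Real.exp (-x) = 1 / Real.exp x := by rw [Real.exp_neg]; ring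
  rw [h3]
  rw [div_le_iff₀ (Real.exp_pos x)]
  have h4 : (0:ℝ) ≤ 1 - x + x ^ 2 / 2 := by nlinarith [sq_nonneg (x - 1)]
  nlinarith [mul_le_mul_of_nonneg_left h1 h4, sq_nonneg (x ^ 2)]
-- count of falsified literals
lemma card_unsat_lits {n : ℕ} (v : Assignment n) :
    ((univ : Finset (Fin n × Bool)).filter fun l => ¬ v l.1 = l.2).card = n := by
  have himg : ((univ : Finset (Fin n × Bool)).filter fun l => ¬ v l.1 = l.2)
      = univ.image fun x : Fin n => (x, !(v x)) := by
    ext ⟨x, b⟩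
    simp only [mem_filter, mem_univ, true_and, mem_image, Prod.mk.injEq]
    constructor
    · intro h
      exact ⟨x, rfl, by cases hb : v x <;> cases b <;> simp_all⟩
    · rintro ⟨y, rfl, rfl⟩
      cases v y <;> simp
  rw [himg, card_image_of_injective _ (fun a b h => by
    simpa using congrArg Prod.fst h)]
  simp

lemma card_unsat_clauses {n k : ℕ} (v : Assignment n) :
    ((univ : Finset (Clause n k)).filter fun c => ¬ SatClause v c).card = n ^ k := by
  have h : ((univ : Finset (Clause n k)).filter fun c => ¬ SatClause v c)
      = Fintype.piFinset (fun _ : Fin k =>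
          (univ : Finset (Fin n × Bool)).filter fun l => ¬ v l.1 = l.2) := by
    ext c
    simp [SatClause, Fintype.mem_piFinset, not_exists]
  rw [h, Fintype.card_piFinset]
  simp [card_unsat_lits v]

lemma countA (n k m : ℕ) (hn : 0 < n) (t T : ℝ) (ht : 0 ≤ t) (v : Assignment n) :
    ((univ.filter fun φ : Formula n k m => (numUnsat φ v : ℝ) ≤ T).card : ℝ)
      ≤ Real.exp (t * T + (m : ℝ) / 2 ^ k * (t ^ 2 / 2 - t)) *
        (Fintype.card (Formula n k m) : ℝ) := by
  set g : Clause n k → ℝ := fun c => if ¬ SatClause v c then Real.exp (-t) else 1 with hg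
  have hNA : (Fintype.card (Clause n k) : ℝ) = 2 ^ k * (n : ℝ) ^ k := by
    have : Fintype.card (Clause n k) = (2 * n) ^ k := by
      simp [Fintype.card_fun, Fintype.card_prod, mul_comm]
    rw [this]
    push_cast
    rw [mul_pow]
  -- step 1 : indicator bound
  have step1 : ((univ.filter fun φ : Formula n k m => (numUnsat φ v : ℝ) ≤ T).card : ℝ)
      ≤ ∑ φ : Formula n k m, Real.exp (t * (T - (numUnsat φ v : ℝ))) := by
    rw [Finset.card_filter]
    push_cast
    apply Finset.sum_le_sum
    intro φ _
    split_ifs with h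
    · have : 0 ≤ t * (T - (numUnsat φ v : ℝ)) := mul_nonneg ht (by linarith)
      exact Real.one_le_exp this
    · positivity
  -- step 2 : factorization
  have hX : ∀ φ : Formula n k m,
      Real.exp (t * (T - (numUnsat φ v : ℝ))) = Real.exp (t * T) * ∏ j, g (φ j) := by
    intro φ
    have hnum : (numUnsat φ v : ℝ) = ∑ j, (if ¬ SatClause v (φ j) then (1:ℝ) else 0) := by
      rw [numUnsat, Finset.card_filter]
      push_cast
      rfl
    rw [mul_sub, Real.exp_sub, hnum, Finset.mul_sum]
    rw [div_eq_mul_inv, ← Real.exp_neg]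
    congr 1
    rw [← Finset.sum_neg_distrib, Real.exp_sum]
    apply Finset.prod_congr rfl
    intro j _
    by_cases h : SatClause v (φ j) <;> simp [hg, h]
  -- step 3 : independence
  have step3 : ∑ φ : Formula n k m, ∏ j, g (φ j) = (∑ c : Clause n k, g c) ^ m := by
    calc ∑ φ : Formula n k m, ∏ j, g (φ j)
        = ∑ φ ∈ Fintype.piFinset (fun _ : Fin m => (univ : Finset (Clause n k))),
            ∏ j, g (φ j) := by rw [Fintype.piFinset_univ]
      _ = ∏ _j : Fin m, ∑ c : Clause n k, g c := (Finset.prod_univ_sum _ _).symm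
      _ = (∑ c : Clause n k, g c) ^ m := by
          rw [Finset.prod_const, card_univ, Fintype.card_fin]
  -- step 4 : single-clause expectation
  have step4 : ∑ c : Clause n k, g c
      = (Fintype.card (Clause n k) : ℝ) + (n : ℝ) ^ k * (Real.exp (-t) - 1) := by
    have hpt : ∀ c : Clause n k,
        g c = 1 + (if ¬ SatClause v c then Real.exp (-t) - 1 else 0) := by
      intro c; by_cases h : SatClause v c <;> simp [hg, h]
    simp_rw [hpt]
    rw [Finset.sum_add_distrib, Finset.sum_const, ← Finset.sum_filter, Finset.sum_const,
      card_unsat_clauses v, card_univ]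
    push_cast [nsmul_eq_mul]
    ring
  set N : ℝ := (Fintype.card (Clause n k) : ℝ) with hN
  have hNpos : 0 < N := by rw [hNA]; positivity
  have hA : (n : ℝ) ^ k = N / 2 ^ k := by rw [hNA]; field_simp
  have hq := exp_neg_le_quad ht
  -- step 5 : exponential bound on single-clause expectation
  have step5 : ∑ c : Clause n k, g c ≤ N * Real.exp ((t ^ 2 / 2 - t) / 2 ^ k) := by
    rw [step4, hA]
    have h1 : N / 2 ^ k * (Real.exp (-t) - 1) ≤ N / 2 ^ k * (t ^ 2 / 2 - t) :=
      mul_le_mul_of_nonneg_left (by linarith) (by positivity)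
    have h2 := Real.add_one_le_exp ((t ^ 2 / 2 - t) / 2 ^ k)
    calc N + N / 2 ^ k * (Real.exp (-t) - 1)
        ≤ N + N / 2 ^ k * (t ^ 2 / 2 - t) := by linarith
      _ = N * (1 + (t ^ 2 / 2 - t) / 2 ^ k) := by field_simp
      _ ≤ N * Real.exp ((t ^ 2 / 2 - t) / 2 ^ k) :=
          mul_le_mul_of_nonneg_left (by linarith) hNpos.le
  have hgnn : 0 ≤ ∑ c : Clause n k, g c := by
    apply Finset.sum_nonneg
    intro c _
    rw [hg]
    dsimp only
    split_ifs
    · norm_num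
    · exact (Real.exp_pos _).le
  have hcard : (Fintype.card (Formula n k m) : ℝ) = N ^ m := by
    rw [show Fintype.card (Formula n k m) = Fintype.card (Clause n k) ^ m from by
      simp [Fintype.card_fun]]
    push_cast
    rw [hN]
  calc ((univ.filter fun φ : Formula n k m => (numUnsat φ v : ℝ) ≤ T).card : ℝ)
      ≤ ∑ φ : Formula n k m, Real.exp (t * (T - (numUnsat φ v : ℝ))) := step1
    _ = Real.exp (t * T) * ∑ φ : Formula n k m, ∏ j, g (φ j) := by
        simp_rw [hX]; rw [← Finset.mul_sum]
    _ = Real.exp (t * T) * (∑ c : Clause n k, g c) ^ m := by rw [step3]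
    _ ≤ Real.exp (t * T) * (N * Real.exp ((t ^ 2 / 2 - t) / 2 ^ k)) ^ m :=
        mul_le_mul_of_nonneg_left (pow_le_pow_left₀ hgnn step5 m) (Real.exp_pos _).le
    _ = Real.exp (t * T) * Real.exp ((m : ℝ) * ((t ^ 2 / 2 - t) / 2 ^ k)) * N ^ m := by
        rw [mul_pow, ← Real.exp_nat_mul]; ring
    _ = Real.exp (t * T + (m : ℝ) / 2 ^ k * (t ^ 2 / 2 - t)) * N ^ m := by
        rw [← Real.exp_add]
        congr 1
        ring
    _ = Real.exp (t * T + (m : ℝ) / 2 ^ k * (t ^ 2 / 2 - t)) *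
        (Fintype.card (Formula n k m) : ℝ) := by rw [hcard]


set_option maxHeartbeats 1000000 in
/-- For `ε > 0`, `0 < α < 1` with `2^k(1−α)^{2k} > (1+ε)/ε`, set
`T̃ = m(1−(1−α)^{2k})/(2^k−1)` and `E = exp(−(1−α)^{4k} m/(4(1+ε)² 2^k))`.  For `φ` drawn
uniformly from all formulas with `m` clauses, with probability at least `1 − E` the number of
assignments `v` with `NumClausesUnSAT(φ,v) ≤ T̃` is less than `E·2^n`. -/
theorem false_positive_count_bound (n k m : ℕ) (hn : 0 < n) (hk : 0 < k) (hm : 0 < m)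
    (ε α : ℝ) (hε : 0 < ε) (hα0 : 0 < α) (hα1 : α < 1)
    (hcond : 2 ^ k * (1 - α) ^ (2 * k) > (1 + ε) / ε) :
    let T : ℝ := m * (1 - (1 - α) ^ (2 * k)) / (2 ^ k - 1)
    let E : ℝ := Real.exp (-(1 - α) ^ (4 * k) * m / (4 * (1 + ε) ^ 2 * 2 ^ k))
    (((univ : Finset (Formula n k m)).filter fun φ =>
        (((univ : Finset (Assignment n)).filter fun v =>
            (numUnsat φ v : ℝ) ≤ T).card : ℝ) < E * 2 ^ n).card : ℝ)
      / (Fintype.card (Formula n k m) : ℝ) ≥ 1 - E := by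
  intro T E
  have hT : T = (m : ℝ) * (1 - (1 - α) ^ (2 * k)) / (2 ^ k - 1) := rfl
  have hE : E = Real.exp (-(1 - α) ^ (4 * k) * m / (4 * (1 + ε) ^ 2 * 2 ^ k)) := rfl
  set K : ℝ := (2 : ℝ) ^ k with hKdef
  set β : ℝ := (1 - α) ^ (2 * k) with hβdef
  have hβ0 : 0 < β := pow_pos (by linarith) _
  have hβ1 : β < 1 := pow_lt_one₀ (by linarith) (by linarith) (by positivity)
  have hK2 : (2 : ℝ) ≤ K := by
    calc (2:ℝ) = 2 ^ 1 := (pow_one 2).symm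
      _ ≤ 2 ^ k := pow_le_pow_right₀ (by norm_num) hk
  have hK1 : (0:ℝ) < K - 1 := by linarith
  have hεK : (1 + ε) / ε < K * β := hcond
  have h1ε : (1:ℝ) < (1 + ε) / ε := by rw [lt_div_iff₀ hε]; linarith
  have hKβ1 : 1 < K * β := lt_trans h1ε hεK
  set δ : ℝ := (K * β - 1) / (K - 1) with hδdef
  have hδ0 : 0 < δ := div_pos (by linarith) hK1
  have hδ1 : δ < 1 := by
    rw [div_lt_one hK1]
    nlinarith
  have hεKβ : 1 + ε < ε * (K * β) := by
    rw [div_lt_iff₀ hε] at hεK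
    nlinarith [hεK]
  have hδlb : β / (1 + ε) ≤ δ := by
    rw [div_le_div_iff₀ (by linarith) hK1]
    nlinarith [hβ0.le, hβ1.le]
  have hE0 : 0 < E := Real.exp_pos _
  have hβ4 : (1 - α) ^ (4 * k) = β ^ 2 := by
    rw [hβdef, ← pow_mul]
    congr 1
    ring
  -- key: T = (m/K) * (1 - δ)
  have hTδ : T = (m : ℝ) / K * (1 - δ) := by
    rw [hT, hδdef]
    field_simp
    ring
  -- per-assignment bound
  have keyA : ∀ v : Assignment n,
      ((univ.filter fun φ : Formula n k m => (numUnsat φ v : ℝ) ≤ T).card : ℝ)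
        ≤ E ^ 2 * (Fintype.card (Formula n k m) : ℝ) := by
    intro v
    refine (countA n k m hn δ T hδ0.le v).trans ?_
    have hexp : δ * T + (m : ℝ) / 2 ^ k * (δ ^ 2 / 2 - δ)
        = -((m : ℝ) / K) * δ ^ 2 / 2 := by
      rw [hTδ, hKdef]
      ring
    have hEsq : E ^ 2 = Real.exp (-β ^ 2 * m / (2 * (1 + ε) ^ 2 * K)) := by
      rw [hE, ← Real.exp_nat_mul, hβ4]
      congr 1
      have h1 : ((1:ℝ) + ε) ^ 2 ≠ 0 := by positivity
      have h2 : K ≠ 0 := by linarith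
      field_simp
      ring
    apply mul_le_mul_of_nonneg_right _ (Nat.cast_nonneg _)
    rw [hEsq]
    apply Real.exp_le_exp.2
    rw [hexp]
    have hδsq : (β / (1 + ε)) ^ 2 ≤ δ ^ 2 :=
      pow_le_pow_left₀ (by positivity) hδlb 2
    have hKpos : (0:ℝ) < K := by linarith
    rw [div_pow] at hδsq
    have hmK : (0:ℝ) ≤ (m : ℝ) / K := by positivity
    calc -((m : ℝ) / K) * δ ^ 2 / 2 ≤ -((m : ℝ) / K) * (β ^ 2 / (1 + ε) ^ 2) / 2 := by
          have := mul_le_mul_of_nonneg_left hδsq hmK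
          linarith
      _ = -β ^ 2 * m / (2 * (1 + ε) ^ 2 * K) := by
          field_simp
  -- double counting
  have hcards : (Fintype.card (Assignment n) : ℝ) = 2 ^ n := by
    simp [Fintype.card_fun]
  have hswap : ∑ φ : Formula n k m,
      (((univ : Finset (Assignment n)).filter fun v => (numUnsat φ v : ℝ) ≤ T).card : ℝ)
      = ∑ v : Assignment n,
        ((univ.filter fun φ : Formula n k m => (numUnsat φ v : ℝ) ≤ T).card : ℝ) := by
    simp_rw [Finset.card_filter]
    push_cast
    rw [Finset.sum_comm]
  have htotal : ∑ φ : Formula n k m,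
      (((univ : Finset (Assignment n)).filter fun v => (numUnsat φ v : ℝ) ≤ T).card : ℝ)
      ≤ 2 ^ n * (E ^ 2 * (Fintype.card (Formula n k m) : ℝ)) := by
    rw [hswap, ← hcards]
    calc ∑ v : Assignment n,
        ((univ.filter fun φ : Formula n k m => (numUnsat φ v : ℝ) ≤ T).card : ℝ)
        ≤ ∑ _v : Assignment n, E ^ 2 * (Fintype.card (Formula n k m) : ℝ) :=
          Finset.sum_le_sum fun v _ => keyA v
      _ = (Fintype.card (Assignment n) : ℝ) * (E ^ 2 * (Fintype.card (Formula n k m) : ℝ)) := by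
          rw [Finset.sum_const, card_univ, nsmul_eq_mul]
  -- Markov
  set Bad : Finset (Formula n k m) := univ.filter fun φ =>
      ¬ ((((univ : Finset (Assignment n)).filter fun v =>
        (numUnsat φ v : ℝ) ≤ T).card : ℝ) < E * 2 ^ n) with hBad
  have hBadbound : (Bad.card : ℝ) * (E * 2 ^ n)
      ≤ 2 ^ n * (E ^ 2 * (Fintype.card (Formula n k m) : ℝ)) := by
    refine le_trans ?_ htotal
    calc (Bad.card : ℝ) * (E * 2 ^ n) = ∑ _φ ∈ Bad, E * 2 ^ n := by
          rw [Finset.sum_const, nsmul_eq_mul]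
      _ ≤ ∑ φ ∈ Bad,
          (((univ : Finset (Assignment n)).filter fun v =>
            (numUnsat φ v : ℝ) ≤ T).card : ℝ) := by
          apply Finset.sum_le_sum
          intro φ hφ
          rw [hBad, mem_filter] at hφ
          exact le_of_not_gt hφ.2
      _ ≤ ∑ φ : Formula n k m,
          (((univ : Finset (Assignment n)).filter fun v =>
            (numUnsat φ v : ℝ) ≤ T).card : ℝ) := by
          apply Finset.sum_le_sum_of_subset_of_nonneg (Finset.subset_univ _)
          intro φ _ _
          positivity
  have hBadle : (Bad.card : ℝ) ≤ E * (Fintype.card (Formula n k m) : ℝ) := by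
    have h2n : (0:ℝ) < 2 ^ n := by positivity
    have := hBadbound
    rw [show 2 ^ n * (E ^ 2 * (Fintype.card (Formula n k m) : ℝ))
        = (E * (Fintype.card (Formula n k m) : ℝ)) * (E * 2 ^ n) by ring] at this
    exact le_of_mul_le_mul_right this (by positivity)
  -- conclude
  haveI : Nonempty (Fin n) := ⟨⟨0, hn⟩⟩
  have hFpos : (0:ℝ) < (Fintype.card (Formula n k m) : ℝ) := by
    exact_mod_cast Fintype.card_pos
  have hsplit : ((univ.filter fun φ : Formula n k m =>
        (((univ : Finset (Assignment n)).filter fun v =>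
            (numUnsat φ v : ℝ) ≤ T).card : ℝ) < E * 2 ^ n).card : ℝ)
      + (Bad.card : ℝ) = (Fintype.card (Formula n k m) : ℝ) := by
    rw [hBad]
    have := Finset.card_filter_add_card_filter_not (s := (univ : Finset (Formula n k m)))
      (p := fun φ => (((univ : Finset (Assignment n)).filter fun v =>
            (numUnsat φ v : ℝ) ≤ T).card : ℝ) < E * 2 ^ n)
    rw [Finset.card_univ] at this
    exact_mod_cast this
  rw [ge_iff_le, le_div_iff₀ hFpos]
  linarith [hBadle, hsplit, hFpos]
end

section
/- Let k ≥ 60. Let ε > 0 and 0 < α < 1 be real numbers such that 2^k(1−α)^{2k} > (1+ε)/ε. Let m = (ln(2)·2^k − γ)·n for some real γ ∈ [0, ln(2)·2^k/4]. Let E = exp(−(ln 2/(8(1+ε)^2))·(1−α)^{4k}·n). Then for φ drawn from D_R(m,n,k), with probability greater than 1 − E, the number of assignments v with NumClausesSAT(φ, v) ≥ (1 − (1−(1−α)^{2k})/(2^k−1))·m is less than E · 2^n. -/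
open scoped Classical
open Finset

/-!
For a fixed assignment `v`, the number of clauses of a uniform formula falsified by `v` is
binomial with mean `μ = m / 2^k`. Writing `q = (1-α)^{2k}`, the threshold `T` is reached exactly
when at most `(1-δ)μ` clauses are falsified, where `δ = (2^k q - 1)/(2^k - 1)`, so Chernoff's
lower-tail bound makes the proportion of such formulas at most `exp(-μδ²/2)`. The condition on
`ε` gives `δ > q/(1+ε)` and the bound on `γ` gives `μ ≥ (3/4) ln 2 · n`, whence
`exp(-μδ²/2) < E²`. Summing over `v`, the expected number of assignments reaching `T` is below
`E² 2^n`, and Markov's inequality bounds the probability that it reaches `E 2^n` by `E`.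
-/

open Real

theorem Real.exp_neg_le_one_sub_add_sq_div_two {x : ℝ} (hx : 0 ≤ x) :
    exp (-x) ≤ 1 - x + x ^ 2 / 2 := by
  have hpos : 0 < 1 - x + x ^ 2 / 2 := by nlinarith [sq_nonneg (x - 1)]
  rw [exp_neg, inv_le_iff_one_le_mul₀ (exp_pos x)]
  nlinarith [mul_le_mul_of_nonneg_left (quadratic_le_exp_of_nonneg hx) hpos.le, pow_nonneg hx 4]

section Chernoff

variable {α : Type*} [Fintype α] (P : α → Prop) [DecidablePred P]

theorem sum_pow_card_filter {R : Type*} [CommRing R] (m : ℕ) (x : R) :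
    ∑ f : Fin m → α, x ^ #{i | P (f i)} = (Fintype.card α + #{a | P a} * (x - 1)) ^ m := by
  have hprod (f : Fin m → α) : x ^ #{i | P (f i)} = ∏ i, (1 + if P (f i) then x - 1 else 0) := by
    rw [← prod_const, prod_filter]
    exact prod_congr rfl fun i _ => by split_ifs <;> ring
  have hsum : ∑ a : α, (1 + if P a then x - 1 else 0) = Fintype.card α + #{a | P a} * (x - 1) := by
    rw [sum_add_distrib, ← sum_filter, sum_const, sum_const, card_univ, nsmul_eq_mul,
      nsmul_eq_mul, mul_one]
  simp_rw [hprod, ← hsum, Fintype.sum_pow]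

theorem card_filter_card_le_le_exp (m : ℕ) {p δ : ℝ} (hp : (#{a | P a} : ℝ) = p * Fintype.card α)
    (hp0 : 0 ≤ p) (hδ : 0 ≤ δ) :
    (#{f : Fin m → α | (#{i | P (f i)} : ℝ) ≤ (1 - δ) * (p * m)} : ℝ)
      ≤ Fintype.card α ^ m * exp (-(p * m * δ ^ 2 / 2)) := by
  set B := ({f : Fin m → α | (#{i | P (f i)} : ℝ) ≤ (1 - δ) * (p * m)} : Finset _)
  set x := exp (-δ)
  have hmarkov : (#B : ℝ) * exp (-(δ * ((1 - δ) * (p * m)))) ≤ ∑ f ∈ B, x ^ #{i | P (f i)} := by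
    rw [← nsmul_eq_mul]
    refine card_nsmul_le_sum _ _ _ fun f hf => ?_
    rw [← exp_nat_mul, exp_le_exp]
    nlinarith [(mem_filter.mp hf).2]
  have hbase : (Fintype.card α + #{a | P a} * (x - 1) : ℝ) ≤ Fintype.card α * exp (p * (x - 1)) := by
    rw [hp]
    nlinarith [add_one_le_exp (p * (x - 1)), (Nat.cast_nonneg (Fintype.card α) : (0:ℝ) ≤ _)]
  have hmgf : ∑ f ∈ B, x ^ #{i | P (f i)} ≤ Fintype.card α ^ m * exp (p * m * (x - 1)) := by
    calc ∑ f ∈ B, x ^ #{i | P (f i)}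
        ≤ ∑ f : Fin m → α, x ^ #{i | P (f i)} :=
          sum_le_sum_of_subset_of_nonneg (subset_univ _) fun _ _ _ => by positivity
      _ = (Fintype.card α + #{a | P a} * (x - 1)) ^ m := sum_pow_card_filter P m x
      _ ≤ (Fintype.card α * exp (p * (x - 1))) ^ m := by
          refine pow_le_pow_left₀ ?_ hbase m
          have : (#{a | P a} : ℝ) ≤ Fintype.card α := by exact_mod_cast card_le_univ _
          nlinarith [exp_pos (-δ), exp_le_one_iff.mpr (neg_nonpos.mpr hδ)]
      _ = Fintype.card α ^ m * exp (p * m * (x - 1)) := by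
          rw [mul_pow, ← exp_nat_mul]; ring_nf
  have hexponent : p * m * (x - 1) + δ * ((1 - δ) * (p * m)) ≤ -(p * m * δ ^ 2 / 2) := by
    have := exp_neg_le_one_sub_add_sq_div_two hδ
    have hμ : 0 ≤ p * m := by positivity
    nlinarith
  calc (#B : ℝ) = #B * exp (-(δ * ((1 - δ) * (p * m)))) * exp (δ * ((1 - δ) * (p * m))) := by
        rw [mul_assoc, ← exp_add, neg_add_cancel, exp_zero, mul_one]
    _ ≤ Fintype.card α ^ m * exp (p * m * (x - 1)) * exp (δ * ((1 - δ) * (p * m))) := by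
        exact mul_le_mul_of_nonneg_right (hmarkov.trans hmgf) (exp_pos _).le
    _ ≤ Fintype.card α ^ m * exp (-(p * m * δ ^ 2 / 2)) := by
        rw [mul_assoc, ← exp_add]; gcongr

end Chernoff

theorem mul_card_lt_card_filter_card_filter_lt {α β : Type*} [Fintype α] [Fintype β] [Nonempty β]
    (R : α → β → Prop) [DecidableRel R] {E : ℝ} (hE : 0 < E)
    (h : ∀ b, (#{a | R a b} : ℝ) < E ^ 2 * Fintype.card α) :
    (1 - E) * Fintype.card α < #{a | (#{b | R a b} : ℝ) < E * Fintype.card β} := by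
  set bad := ({a | ¬ (#{b | R a b} : ℝ) < E * Fintype.card β} : Finset α)
  have hdouble : ∑ a, (#{b | R a b} : ℝ) = ∑ b, (#{a | R a b} : ℝ) := by
    simp only [card_filter, Nat.cast_sum]
    exact sum_comm
  have hbad : (#bad : ℝ) * (E * Fintype.card β) < E * Fintype.card α * (E * Fintype.card β) :=
    calc (#bad : ℝ) * (E * Fintype.card β) ≤ ∑ a ∈ bad, (#{b | R a b} : ℝ) := by
          rw [← nsmul_eq_mul]
          exact card_nsmul_le_sum _ _ _ fun a ha => not_lt.mp (mem_filter.mp ha).2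
      _ ≤ ∑ b, (#{a | R a b} : ℝ) := by
          rw [← hdouble]
          exact sum_le_sum_of_subset_of_nonneg (subset_univ _) fun _ _ _ => by positivity
      _ < ∑ _b : β, E ^ 2 * Fintype.card α := sum_lt_sum_of_nonempty univ_nonempty fun b _ => h b
      _ = E * Fintype.card α * (E * Fintype.card β) := by
          rw [sum_const, card_univ, nsmul_eq_mul]; ring
  have hsplit : (#{a | (#{b | R a b} : ℝ) < E * Fintype.card β} : ℝ) + #bad = Fintype.card α := by
    exact_mod_cast card_filter_add_card_filter_not _
  linarith [lt_of_mul_lt_mul_right hbad (by positivity)]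

theorem card_filter_not_satClause {n k : ℕ} (v : Assignment n) :
    #{c : Clause n k | ¬ SatClause v c} = n ^ k := by
  have : ({c : Clause n k | ¬ SatClause v c} : Finset _)
      = Fintype.piFinset fun _ => univ.image fun i => (i, !v i) := by
    ext c
    simp [SatClause, Prod.ext_iff, Bool.eq_not_iff]
  rw [this, Fintype.card_piFinset, prod_const,
    card_image_of_injective _ fun _ _ h => congrArg Prod.fst h]
  simp

theorem numSat_add_numUnsat {n k m : ℕ} (φ : Formula n k m) (v : Assignment n) :
    numSat φ v + numUnsat φ v = m := by
  rw [numSat, numUnsat, card_filter_add_card_filter_not, card_univ, Fintype.card_fin]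

theorem card_filter_le_numSat_le {n k m : ℕ} (v : Assignment n) {δ : ℝ} (hδ : 0 ≤ δ) :
    (#{φ : Formula n k m | (m : ℝ) - (1 - δ) * ((2 ^ k)⁻¹ * m) ≤ numSat φ v} : ℝ)
      ≤ Fintype.card (Formula n k m) * exp (-((2 ^ k)⁻¹ * m * δ ^ 2 / 2)) := by
  have hsub : ({φ : Formula n k m | (m : ℝ) - (1 - δ) * ((2 ^ k)⁻¹ * m) ≤ numSat φ v} : Finset _)
      ⊆ ({φ : Formula n k m | (#{j | ¬ SatClause v (φ j)} : ℝ) ≤ (1 - δ) * ((2 ^ k)⁻¹ * m)} :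
        Finset _) := by
    intro φ hφ
    have := congrArg (Nat.cast : ℕ → ℝ) (numSat_add_numUnsat φ v)
    simp only [mem_filter, mem_univ, true_and] at hφ ⊢
    push_cast [numUnsat] at this
    linarith
  have hp : (#{c : Clause n k | ¬ SatClause v c} : ℝ) = (2 ^ k)⁻¹ * Fintype.card (Clause n k) := by
    rw [card_filter_not_satClause, Fintype.card_fun, Fintype.card_prod, Fintype.card_bool,
      Fintype.card_fin, Fintype.card_fin]
    push_cast
    field_simp
    ring
  refine (Nat.cast_le.mpr (card_le_card hsub)).trans ?_
  simpa using card_filter_card_le_le_exp (fun c => ¬ SatClause v c) m hp (by positivity) hδ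

theorem div_one_add_lt_mul_sub_one_div_sub_one {K q ε : ℝ} (hK : 1 < K) (hε : 0 < ε) (hq : 0 ≤ q)
    (h : (1 + ε) / ε < K * q) : q / (1 + ε) < (K * q - 1) / (K - 1) := by
  rw [div_lt_iff₀ hε] at h
  rw [div_lt_div_iff₀ (by linarith) (by linarith)]
  nlinarith

theorem exp_neg_mul_sq_div_two_lt_sq {n k m : ℕ} {γ r δ : ℝ} (hn : 0 < n)
    (hγ : γ ≤ log 2 * 2 ^ k / 4) (hm : (m : ℝ) = (log 2 * 2 ^ k - γ) * n) (hr : 0 ≤ r)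
    (hδ : r < δ) :
    exp (-((2 ^ k)⁻¹ * m * δ ^ 2 / 2)) < exp (-(log 2 * r ^ 2 * n / 8)) ^ 2 := by
  have hlog := log_pos one_lt_two
  have hn' : (0 : ℝ) < n := Nat.cast_pos.mpr hn
  have hμ : 3 / 4 * log 2 * n ≤ (2 ^ k)⁻¹ * m := by
    rw [hm, ← div_eq_inv_mul, le_div_iff₀ (by positivity)]
    nlinarith
  have hsq := mul_lt_mul_of_pos_left (pow_lt_pow_left₀ hδ hr two_ne_zero)
    (show 0 < (2 ^ k)⁻¹ * (m : ℝ) by nlinarith)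
  rw [← exp_nat_mul, exp_lt_exp]
  nlinarith [mul_le_mul_of_nonneg_right hμ (sq_nonneg r), mul_nonneg hlog.le (sq_nonneg r)]

theorem false_positive_count_bound_at_threshold_general (n k m : ℕ) (hn : 0 < n) (hk : 60 ≤ k)
    (ε α : ℝ) (hε : 0 < ε)
    (hcond : 2 ^ k * (1 - α) ^ (2 * k) > (1 + ε) / ε)
    (γ : ℝ) (hγ1 : γ ≤ Real.log 2 * 2 ^ k / 4)
    (hmval : (m : ℝ) = (Real.log 2 * 2 ^ k - γ) * n) :
    let T : ℝ := (1 - (1 - (1 - α) ^ (2 * k)) / (2 ^ k - 1)) * m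
    let E : ℝ := Real.exp (-(Real.log 2 / (8 * (1 + ε) ^ 2)) * (1 - α) ^ (4 * k) * n)
    (((univ : Finset (Formula n k m)).filter fun φ =>
        (((univ : Finset (Assignment n)).filter fun v =>
            T ≤ (numSat φ v : ℝ)).card : ℝ) < E * 2 ^ n).card : ℝ)
      / (Fintype.card (Formula n k m) : ℝ) > 1 - E := by
  intro T E
  set q := (1 - α) ^ (2 * k)
  set δ := (2 ^ k * q - 1) / (2 ^ k - 1)
  have hK : (1 : ℝ) < 2 ^ k := one_lt_pow₀ one_lt_two (by omega)
  have hq : 0 ≤ q := (even_two_mul k).pow_nonneg _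
  have hr : 0 ≤ q / (1 + ε) := by positivity
  have hδ : q / (1 + ε) < δ := div_one_add_lt_mul_sub_one_div_sub_one hK hε hq hcond
  have hT : T = m - (1 - δ) * ((2 ^ k)⁻¹ * m) := by
    have : (2 : ℝ) ^ k - 1 ≠ 0 := by linarith
    simp only [T, δ, q]; field_simp; ring
  have hE : E = exp (-(log 2 * (q / (1 + ε)) ^ 2 * n / 8)) := by
    simp only [E, q]; field_simp; ring_nf
  have hN : (0 : ℝ) < Fintype.card (Formula n k m) := by
    have : Nonempty (Fin n) := ⟨⟨0, hn⟩⟩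
    exact_mod_cast Fintype.card_pos
  have hcard : (Fintype.card (Assignment n) : ℝ) = 2 ^ n := by simp
  rw [gt_iff_lt, lt_div_iff₀ hN, ← hcard]
  refine mul_card_lt_card_filter_card_filter_lt _ (exp_pos _) fun v => ?_
  calc _ ≤ Fintype.card (Formula n k m) * exp (-((2 ^ k)⁻¹ * m * δ ^ 2 / 2)) := by
        rw [hT]; exact card_filter_le_numSat_le v (hr.trans hδ.le)
    _ < E ^ 2 * Fintype.card (Formula n k m) := by
        rw [mul_comm, hE]; gcongr; exact exp_neg_mul_sq_div_two_lt_sq hn hγ1 hmval hr hδ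

/-- Let `k ≥ 60`, `ε > 0`, `0 < α < 1` with `2^k(1−α)^{2k} > (1+ε)/ε`, and
`m = (ln 2·2^k − γ)n` with `γ ∈ [0, ln 2·2^k/4]`.  Set
`E = exp(−(ln 2/(8(1+ε)²))(1−α)^{4k} n)`.  For `φ` drawn uniformly from all formulas with `m`
clauses, with probability greater than `1 − E` the number of assignments `v` with
`NumClausesSAT(φ,v) ≥ (1 − (1−(1−α)^{2k})/(2^k−1))·m` is less than `E·2^n`. -/
theorem false_positive_count_bound_at_threshold (n k m : ℕ) (hn : 0 < n) (hk : 60 ≤ k)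
    (hm : 0 < m) (ε α : ℝ) (hε : 0 < ε) (hα0 : 0 < α) (hα1 : α < 1)
    (hcond : 2 ^ k * (1 - α) ^ (2 * k) > (1 + ε) / ε)
    (γ : ℝ) (hγ0 : 0 ≤ γ) (hγ1 : γ ≤ Real.log 2 * 2 ^ k / 4)
    (hmval : (m : ℝ) = (Real.log 2 * 2 ^ k - γ) * n) :
    let T : ℝ := (1 - (1 - (1 - α) ^ (2 * k)) / (2 ^ k - 1)) * m
    let E : ℝ := Real.exp (-(Real.log 2 / (8 * (1 + ε) ^ 2)) * (1 - α) ^ (4 * k) * n)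
    (((univ : Finset (Formula n k m)).filter fun φ =>
        (((univ : Finset (Assignment n)).filter fun v =>
            T ≤ (numSat φ v : ℝ)).card : ℝ) < E * 2 ^ n).card : ℝ)
      / (Fintype.card (Formula n k m) : ℝ) > 1 - E :=
  false_positive_count_bound_at_threshold_general n k m hn hk ε α hε hcond γ hγ1 hmval
end

section
/- Let a ∈ {0,1}^n be an assignment and let 0 ≤ α ≤ 1 with αn an integer. If c is drawn from D_pc(n,k,a) and, independently, h is drawn uniformly from H_=(a, α, n), then the probability that h does not satisfy c equals (1 − (1−α)^k)/(2^k − 1). -/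
open scoped Classical
open Finset

lemma pi_count {n : ℕ} (k : ℕ) (S : Finset (Fin n × Bool)) :
    (univ.filter fun c : Clause n k => ∀ i, c i ∈ S).card = S.card ^ k := by
  have h : (univ.filter fun c : Clause n k => ∀ i, c i ∈ S)
      = Fintype.piFinset fun _ => S := by
    ext c; simp [Fintype.mem_piFinset]
  rw [h, Fintype.card_piFinset]
  simp

lemma lit_card {n : ℕ} (h : Assignment n) :
    (univ.filter fun p : Fin n × Bool => ¬ h p.1 = p.2).card = n := by
  have he : (univ.filter fun p : Fin n × Bool => ¬ h p.1 = p.2)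
      = univ.image fun v => (v, !h v) := by
    ext ⟨v, b⟩
    simp only [mem_filter, mem_univ, true_and, mem_image, Prod.mk.injEq]
    constructor
    · intro hb; exact ⟨v, rfl, by cases hv : h v <;> cases b <;> simp_all⟩
    · rintro ⟨x, rfl, rfl⟩; cases h x <;> simp
  rw [he, Finset.card_image_of_injective _ (fun x y hxy => (Prod.mk.injEq _ _ _ _ ▸ hxy).1)]
  simp

lemma lit_card2 {n : ℕ} (a h : Assignment n) :
    (univ.filter fun p : Fin n × Bool => ¬ a p.1 = p.2 ∧ ¬ h p.1 = p.2).card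
      = n - hammingDist a h := by
  have he : (univ.filter fun p : Fin n × Bool => ¬ a p.1 = p.2 ∧ ¬ h p.1 = p.2)
      = (univ.filter fun v => a v = h v).image fun v => (v, !a v) := by
    ext ⟨v, b⟩
    simp only [mem_filter, mem_univ, true_and, mem_image, Prod.mk.injEq]
    constructor
    · rintro ⟨h1, h2⟩
      refine ⟨v, ?_, rfl, ?_⟩ <;> cases hv : a v <;> cases hw : h v <;> cases b <;> simp_all
    · rintro ⟨x, hx, rfl, rfl⟩
      cases hv : a x <;> simp_all
  rw [he, Finset.card_image_of_injective _ (fun x y hxy => (Prod.mk.injEq _ _ _ _ ▸ hxy).1)]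
  have := Finset.card_filter_add_card_filter_not
    (s := (univ : Finset (Fin n))) (p := fun v => a v = h v)
  have hu : (univ : Finset (Fin n)).card = n := by simp
  have hd : hammingDist a h = (univ.filter fun v => ¬ a v = h v).card := rfl
  omega

lemma unsat_count {n k : ℕ} (h : Assignment n) :
    (univ.filter fun c : Clause n k => ¬ SatClause h c).card = n ^ k := by
  have : (univ.filter fun c : Clause n k => ¬ SatClause h c)
      = univ.filter fun c : Clause n k =>
          ∀ i, c i ∈ (univ.filter fun p : Fin n × Bool => ¬ h p.1 = p.2) := by
    ext c; simp [SatClause, not_exists]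
  rw [this, pi_count, lit_card]

lemma unsat2_count {n k : ℕ} (a h : Assignment n) :
    (univ.filter fun c : Clause n k => ¬ SatClause a c ∧ ¬ SatClause h c).card
      = (n - hammingDist a h) ^ k := by
  have : (univ.filter fun c : Clause n k => ¬ SatClause a c ∧ ¬ SatClause h c)
      = univ.filter fun c : Clause n k =>
          ∀ i, c i ∈ (univ.filter fun p : Fin n × Bool => ¬ a p.1 = p.2 ∧ ¬ h p.1 = p.2) := by
    ext c; simp [SatClause, not_exists, forall_and]
  rw [this, pi_count, lit_card2]

lemma mix_count {n k : ℕ} (a h : Assignment n) :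
    (univ.filter fun c : Clause n k => SatClause a c ∧ ¬ SatClause h c).card
      = n ^ k - (n - hammingDist a h) ^ k := by
  have h1 := Finset.card_filter_add_card_filter_not
    (s := univ.filter fun c : Clause n k => ¬ SatClause h c) (p := fun c => SatClause a c)
  rw [Finset.filter_filter, Finset.filter_filter, unsat_count] at h1
  have h2 : (univ.filter fun c : Clause n k => ¬ SatClause h c ∧ ¬ SatClause a c).card
      = (n - hammingDist a h) ^ k := by
    rw [hammingDist_comm a h] at *
    rw [← unsat2_count h a]
  have h3 : (univ.filter fun c : Clause n k => SatClause a c ∧ ¬ SatClause h c)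
      = univ.filter fun c : Clause n k => ¬ SatClause h c ∧ SatClause a c := by
    ext c; simp only [mem_filter]; tauto
  rw [h3]
  omega

lemma dist_exists {n : ℕ} (a : Assignment n) (t : ℕ) (htn : t ≤ n) :
    ∃ h : Assignment n, hammingDist a h = t := by
  refine ⟨fun v => if (v : ℕ) < t then !(a v) else a v, ?_⟩
  have he : (univ.filter fun v : Fin n => a v ≠ (if (v : ℕ) < t then !(a v) else a v))
      = univ.filter fun v : Fin n => (v : ℕ) < t := by
    ext v
    by_cases hv : (v : ℕ) < t <;> cases hav : a v <;> simp [hv, hav]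
  have hm : (univ.filter fun v : Fin n => (v : ℕ) < t)
      = (univ : Finset (Fin t)).map ⟨Fin.castLE htn, Fin.castLE_injective htn⟩ := by
    ext v
    simp only [mem_filter, mem_univ, true_and, Finset.mem_map, Function.Embedding.coeFn_mk]
    constructor
    · intro hv; exact ⟨⟨(v : ℕ), hv⟩, by ext; simp⟩
    · rintro ⟨i, rfl⟩; exact i.isLt
  show (univ.filter fun v => a v ≠ _).card = t
  rw [he, hm, Finset.card_map, Finset.card_univ, Fintype.card_fin]


/-- Let `a` be an assignment and `0 ≤ α ≤ 1` with `αn = t` an integer.  If a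
clause `c` is drawn uniformly among clauses satisfied by `a` and, independently, `h` is drawn
uniformly among assignments at Hamming distance exactly `αn` from `a`, then
`Pr[h does not satisfy c] = (1 − (1−α)^k)/(2^k − 1)`. -/
theorem planted_clause_unsat_probability (n k : ℕ) (hn : 0 < n) (hk : 0 < k)
    (a : Assignment n) (α : ℝ) (hα0 : 0 ≤ α) (hα1 : α ≤ 1)
    (t : ℕ) (ht : (t : ℝ) = α * n) :
    let Hs : Finset (Assignment n) := univ.filter fun h => hammingDist a h = t
    let Cpc : Finset (Clause n k) := univ.filter fun c => SatClause a c
    (((Cpc ×ˢ Hs).filter fun p => ¬ SatClause p.2 p.1).card : ℝ)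
        / ((Cpc.card : ℝ) * Hs.card)
      = (1 - (1 - α) ^ k) / (2 ^ k - 1) := by
  intro Hs Cpc
  -- basic bounds
  have htn : t ≤ n := by
    have : (t : ℝ) ≤ n := by rw [ht]; nlinarith
    exact_mod_cast this
  -- cardinality of Cpc
  have hCpc : Cpc.card + n ^ k = (2 * n) ^ k := by
    have h1 := Finset.card_filter_add_card_filter_not
      (s := (univ : Finset (Clause n k))) (p := fun c => SatClause a c)
    rw [unsat_count, Finset.card_univ] at h1
    have hu : Fintype.card (Clause n k) = (2 * n) ^ k := by
      simp [mul_comm]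
    rw [hu] at h1
    exact h1
  -- Hs is nonempty
  have hHs : 0 < Hs.card := by
    obtain ⟨h, hh⟩ := dist_exists a t htn
    exact Finset.card_pos.mpr ⟨h, by simp [Hs, hh]⟩
  -- numerator count
  have hnum : ((Cpc ×ˢ Hs).filter fun p => ¬ SatClause p.2 p.1).card
      = Hs.card * (n ^ k - (n - t) ^ k) := by
    rw [Finset.card_filter, Finset.sum_product, Finset.sum_comm]
    rw [Finset.sum_congr rfl (fun h hh => ?_), Finset.sum_const, smul_eq_mul]
    rw [← Finset.card_filter]
    have hdist : hammingDist a h = t := (Finset.mem_filter.mp hh).2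
    have : Cpc.filter (fun c => ¬ SatClause h c)
        = univ.filter fun c : Clause n k => SatClause a c ∧ ¬ SatClause h c := by
      rw [Finset.filter_filter]
    rw [this, mix_count, hdist]
  rw [hnum]
  -- move to the reals
  have hn0 : (n : ℝ) ≠ 0 := Nat.cast_pos.mpr hn |>.ne'
  have hH0 : (Hs.card : ℝ) ≠ 0 := Nat.cast_pos.mpr hHs |>.ne'
  have hpow : (n - t) ^ k ≤ n ^ k := Nat.pow_le_pow_left (Nat.sub_le n t) k
  have hcast1 : ((n ^ k - (n - t) ^ k : ℕ) : ℝ) = (n : ℝ) ^ k - ((n : ℝ) - t) ^ k := by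
    rw [Nat.cast_sub hpow, Nat.cast_pow, Nat.cast_pow, Nat.cast_sub htn]
  have hcast2 : (Cpc.card : ℝ) = (2 * (n : ℝ)) ^ k - (n : ℝ) ^ k := by
    have := congrArg (Nat.cast : ℕ → ℝ) hCpc
    push_cast at this
    linarith
  have h2k : (2 : ℝ) ^ k - 1 ≠ 0 := by
    have : (2 : ℝ) ^ k ≥ 2 ^ 1 := by
      apply pow_le_pow_right₀ (by norm_num) hk
    norm_num at this ⊢
    linarith
  have hα : α = (t : ℝ) / n := by rw [ht]; field_simp
  rw [hcast2, hα]
  push_cast [hcast1]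
  have hnk0 : (n : ℝ) ^ k ≠ 0 := pow_ne_zero _ hn0
  have hr : (1 - (t : ℝ)/n) ^ k = ((n : ℝ) - t) ^ k / (n : ℝ) ^ k := by
    rw [eq_div_iff hnk0, ← mul_pow]
    congr 1
    field_simp
  rw [hr, mul_pow]
  have hden : (2 : ℝ) ^ k * (n : ℝ) ^ k - (n : ℝ) ^ k ≠ 0 := by
    have : (2 : ℝ) ^ k * (n : ℝ) ^ k - (n : ℝ) ^ k = ((2 : ℝ) ^ k - 1) * (n : ℝ) ^ k := by ring
    rw [this]
    exact mul_ne_zero h2k hnk0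
  field_simp
end

section
/- Let S be any set of satisfiable formulas with exactly m clauses, at most n variables, and k literals per clause, and let p_γ ∈ [0,1]. If Pr_{(φ,a) ∼ D_pa(m,n,k)}[φ ∈ S] ≤ p_γ, then Pr_{φ ∼ D_R(m,n,k)}[φ ∈ S] ≤ p_γ · 2^n · e^{−m/2^k}. -/
open scoped Classical
open Finset

/-!
Every `φ ∈ S` has a satisfying assignment, so `#S` is at most the number of planted pairs
`(φ, a)` with `φ ∈ S`, which by hypothesis is at most `pγ` times the number of all planted pairs.
For a fixed `a`, exactly `n ^ k` of the `(2n) ^ k` clauses are falsified by `a`, so there are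
`2 ^ n * ((2n) ^ k - n ^ k) ^ m = 2 ^ n * (1 - 2⁻ᵏ) ^ m * (2n) ^ (k m)` planted pairs, and
`(1 - 2⁻ᵏ) ^ m ≤ exp (-m / 2 ^ k)` since `1 - x ≤ exp (-x)`.
-/

section Counting

variable {n k : ℕ}

lemma card_unsatLiterals (a : Assignment n) :
    (univ.filter fun l : Fin n × Bool => a l.1 ≠ l.2).card = n := by
  have h : ∀ i, ∑ b : Bool, (if a i ≠ b then 1 else 0) = 1 := fun i => by cases a i <;> simp
  simp only [card_filter, Fintype.sum_prod_type, h, sum_const, card_univ, Fintype.card_fin,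
    smul_eq_mul, mul_one]

lemma card_unsatClauses (a : Assignment n) :
    (univ.filter fun c : Clause n k => ¬ SatClause a c).card = n ^ k := by
  have h : (univ.filter fun c : Clause n k => ¬ SatClause a c) =
      Fintype.piFinset fun _ => univ.filter fun l : Fin n × Bool => a l.1 ≠ l.2 := by
    ext c
    simp [SatClause, Fintype.mem_piFinset]
  simp [h, Fintype.card_piFinset, card_unsatLiterals]

lemma card_satClauses (a : Assignment n) :
    (univ.filter fun c : Clause n k => SatClause a c).card = (2 * n) ^ k - n ^ k := by
  have h := card_filter_add_card_filter_not (s := (univ : Finset (Clause n k)))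
    (p := fun c => SatClause a c)
  rw [card_unsatClauses, card_univ] at h
  simp only [Fintype.card_fun, Fintype.card_prod, Fintype.card_fin, Fintype.card_bool] at h
  rw [mul_comm]
  omega

variable {m : ℕ}

lemma card_satFormulas (a : Assignment n) :
    (univ.filter fun φ : Formula n k m => SatFormula a φ).card = ((2 * n) ^ k - n ^ k) ^ m := by
  have h : (univ.filter fun φ : Formula n k m => SatFormula a φ) =
      Fintype.piFinset fun _ => univ.filter fun c : Clause n k => SatClause a c := by
    ext φ
    simp only [mem_filter, mem_univ, true_and, Fintype.mem_piFinset]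
    rfl
  simp [h, Fintype.card_piFinset, card_satClauses]

lemma card_satPairs :
    ((univ : Finset (Formula n k m × Assignment n)).filter fun p => SatFormula p.2 p.1).card =
      2 ^ n * ((2 * n) ^ k - n ^ k) ^ m := by
  rw [card_filter, Fintype.sum_prod_type_right]
  simp [card_satFormulas]

lemma card_formulas : Fintype.card (Formula n k m) = ((2 * n) ^ k) ^ m := by
  simp [mul_comm]

lemma card_le_card_plantedPairs {S : Finset (Formula n k m)}
    (hsat : ∀ φ ∈ S, ∃ a : Assignment n, SatFormula a φ) :
    S.card ≤ ((univ : Finset (Formula n k m × Assignment n)).filter fun p =>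
        SatFormula p.2 p.1 ∧ p.1 ∈ S).card := by
  refine card_le_card_of_surjOn Prod.fst fun φ hφ => ?_
  obtain ⟨a, ha⟩ := hsat φ hφ
  exact ⟨(φ, a), by simp [ha, show φ ∈ S from hφ], rfl⟩

end Counting

-- `b = 0` must be allowed: for `n = 0` or `k = 0` there may be no planted pairs at all.
lemma le_mul_of_div_le_of_le {α : Type*} [Field α] [LinearOrder α] [IsStrictOrderedRing α]
    {a b p : α} (hb : 0 ≤ b) (hab : a ≤ b) (h : a / b ≤ p) : a ≤ p * b := by
  rcases hb.eq_or_lt with hb | hb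
  · subst hb
    simpa using hab
  · rwa [div_le_iff₀ hb] at h

lemma one_sub_pow_le_exp_neg_mul (x : ℝ) (hx : x ≤ 1) (m : ℕ) :
    (1 - x) ^ m ≤ Real.exp (-(m * x)) := by
  calc (1 - x) ^ m ≤ Real.exp (-x) ^ m :=
        pow_le_pow_left₀ (by linarith) (Real.one_sub_le_exp_neg x) m
    _ = Real.exp (-(m * x)) := by rw [← Real.exp_nat_mul]; ring_nf

lemma cast_sub_pow_pow_le_exp_mul (n k m : ℕ) :
    (((2 * n) ^ k - n ^ k : ℕ) : ℝ) ^ m ≤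
      Real.exp (-(m : ℝ) / 2 ^ k) * (((2 * n) ^ k) ^ m : ℕ) := by
  have h2k : (0 : ℝ) < 2 ^ k := by positivity
  have hsub : (((2 * n) ^ k - n ^ k : ℕ) : ℝ) = (1 - 1 / 2 ^ k) * (2 * n) ^ k := by
    rw [Nat.cast_sub (Nat.pow_le_pow_left (by omega) k)]
    push_cast
    field_simp
    ring
  rw [hsub, mul_pow]
  push_cast
  gcongr
  calc (1 - 1 / 2 ^ k : ℝ) ^ m ≤ Real.exp (-(m * (1 / 2 ^ k))) :=
        one_sub_pow_le_exp_neg_mul _ (div_le_one_of_le₀ (one_le_pow₀ one_le_two) h2k.le) m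
    _ = Real.exp (-(m : ℝ) / 2 ^ k) := by ring_nf

theorem planted_to_random_general (n k m : ℕ)
    (S : Finset (Formula n k m)) (hsat : ∀ φ ∈ S, ∃ a : Assignment n, SatFormula a φ)
    (pγ : ℝ)
    (hplanted :
      ((((univ : Finset (Formula n k m × Assignment n)).filter fun p =>
          SatFormula p.2 p.1 ∧ p.1 ∈ S).card : ℝ)
        / (((univ : Finset (Formula n k m × Assignment n)).filter fun p =>
          SatFormula p.2 p.1).card : ℝ)) ≤ pγ) :
    (S.card : ℝ) / (Fintype.card (Formula n k m) : ℝ)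
      ≤ pγ * 2 ^ n * Real.exp (-(m : ℝ) / 2 ^ k) := by
  have hpγ : 0 ≤ pγ := (div_nonneg (Nat.cast_nonneg _) (Nat.cast_nonneg _)).trans hplanted
  have hpairs := le_mul_of_div_le_of_le (Nat.cast_nonneg _)
    (by exact_mod_cast card_le_card (monotone_filter_right _ fun _ _ h => And.left h)) hplanted
  rw [card_satPairs] at hpairs
  refine div_le_of_le_mul₀ (Nat.cast_nonneg _) (by positivity) ?_
  calc (S.card : ℝ) ≤ pγ * (2 ^ n * ((2 * n) ^ k - n ^ k) ^ m : ℕ) :=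
        (Nat.cast_le.2 (card_le_card_plantedPairs hsat)).trans hpairs
    _ ≤ pγ * 2 ^ n * (Real.exp (-(m : ℝ) / 2 ^ k) * (((2 * n) ^ k) ^ m : ℕ)) := by
        push_cast [mul_assoc]
        gcongr
        exact_mod_cast cast_sub_pow_pow_le_exp_mul n k m
    _ = pγ * 2 ^ n * Real.exp (-(m : ℝ) / 2 ^ k) * Fintype.card (Formula n k m) := by
        rw [card_formulas]; ring

/-- Let `S` be any set of satisfiable formulas with `m` clauses and
`p_γ ∈ [0,1]`.  If, for `(φ,a)` drawn uniformly among pairs of a formula with `m` clauses and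
a satisfying assignment, `Pr[φ ∈ S] ≤ p_γ`, then for `φ` drawn uniformly among all formulas
with `m` clauses, `Pr[φ ∈ S] ≤ p_γ·2^n·e^{−m/2^k}`. -/
theorem planted_to_random (n k m : ℕ) (hn : 0 < n) (hk : 0 < k) (hm : 0 < m)
    (S : Finset (Formula n k m)) (hsat : ∀ φ ∈ S, ∃ a : Assignment n, SatFormula a φ)
    (pγ : ℝ) (hpγ0 : 0 ≤ pγ) (hpγ1 : pγ ≤ 1)
    (hplanted :
      ((((univ : Finset (Formula n k m × Assignment n)).filter fun p =>
          SatFormula p.2 p.1 ∧ p.1 ∈ S).card : ℝ)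
        / (((univ : Finset (Formula n k m × Assignment n)).filter fun p =>
          SatFormula p.2 p.1).card : ℝ)) ≤ pγ) :
    (S.card : ℝ) / (Fintype.card (Formula n k m) : ℝ)
      ≤ pγ * 2 ^ n * Real.exp (-(m : ℝ) / 2 ^ k) :=
  planted_to_random_general n k m S hsat pγ hplanted
end

section
/- For a formula φ, let f_count(φ) denote the number of assignments satisfying φ. Then for every assignment a ∈ {0,1}^n, E_{φ ∼ D_pa(m,n,k,a)}[f_count(φ)] = Σ_{i=0}^{n} C(n,i)·(1 − (1 − (1 − i/n)^k)/(2^k − 1))^m. -/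
open scoped Classical
open Finset

/-! Double counting turns the numerator into `∑ v, #{planted φ satisfied by v}`. The clauses of a
formula are chosen independently, so this count is `N(v) ^ m`, where `N(v)` is the number of
clauses satisfied by both `a` and `v`. A clause falsified by both draws each literal from the
`n - d` variables on which `a` and `v` agree (`d` their Hamming distance), so inclusion–exclusion
gives `N(v) = (2n)^k - 2n^k + (n - d)^k`. Grouping the assignments `v` by `d` produces the
binomial coefficients. -/

lemma card_filter_forall_apply {ι β : Type*} [Fintype ι] [DecidableEq ι] [Fintype β]
    (P : β → Prop) [DecidablePred P] :
    #{f : ι → β | ∀ i, P (f i)} = #{b | P b} ^ Fintype.card ι := by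
  have : ({f : ι → β | ∀ i, P (f i)} : Finset _) = Fintype.piFinset fun _ => {b | P b} := by
    ext f; simp [Fintype.mem_piFinset]
  rw [this, Fintype.card_piFinset, prod_const, card_univ]

lemma card_filter_ne_and_ne {α : Type*} [Fintype α] (u v : α → Bool) :
    #{l : α × Bool | u l.1 ≠ l.2 ∧ v l.1 ≠ l.2} = Fintype.card α - hammingDist u v := by
  have hagree : #{x | u x = v x} + hammingDist u v = Fintype.card α :=
    card_filter_add_card_filter_not _
  have hfiber : ∀ x, #{b : Bool | u x ≠ b ∧ v x ≠ b} = if u x = v x then 1 else 0 := by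
    intro x; cases u x <;> cases v x <;> decide
  rw [card_filter, Fintype.sum_prod_type]
  simp only [← card_filter, hfiber]
  omega

lemma sum_comp_hammingDist {α M : Type*} [Fintype α] [DecidableEq α] [AddCommMonoid M]
    (a : α → Bool) (g : ℕ → M) :
    ∑ v, g (hammingDist a v) =
      ∑ i ∈ range (Fintype.card α + 1), (Fintype.card α).choose i • g i := by
  let e : (α → Bool) ≃ Finset α :=
    { toFun v := {x | a x ≠ v x}
      invFun s x := if x ∈ s then !a x else a x
      left_inv v := by
        funext x
        simp only [mem_filter, mem_univ, true_and]
        cases a x <;> cases v x <;> rfl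
      right_inv s := by ext x; by_cases h : x ∈ s <;> simp [h] }
  rw [← card_univ, ← sum_powerset_apply_card, powerset_univ]
  exact Fintype.sum_equiv e _ _ fun v => rfl

section Clauses

variable {n k : ℕ}

lemma card_clauses_unsat_both (u v : Assignment n) :
    #{c : Clause n k | ¬SatClause u c ∧ ¬SatClause v c} = (n - hammingDist u v) ^ k := by
  have h := card_filter_forall_apply (ι := Fin k)
    (fun l : Fin n × Bool => u l.1 ≠ l.2 ∧ v l.1 ≠ l.2)
  simp only [card_filter_ne_and_ne, Fintype.card_fin] at h
  convert h using 3
  simp [SatClause, forall_and]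

lemma card_clauses_sat_both_add (u v : Assignment n) :
    #{c : Clause n k | SatClause u c ∧ SatClause v c} + 2 * n ^ k
      = (2 * n) ^ k + (n - hammingDist u v) ^ k := by
  have hunsat (w : Assignment n) : #{c : Clause n k | ¬SatClause w c} = n ^ k := by
    simpa using card_clauses_unsat_both (k := k) w w
  have htotal := card_filter_add_card_filter_not (s := univ)
    (p := fun c : Clause n k => SatClause u c ∧ SatClause v c)
  have hunion := card_union_add_card_inter
    ({c | ¬SatClause u c} : Finset (Clause n k)) {c | ¬SatClause v c}
  rw [← filter_or, ← filter_and, hunsat, hunsat, card_clauses_unsat_both] at hunion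
  simp only [not_and_or, card_univ, Fintype.card_pi, Fintype.card_prod, Fintype.card_fin,
    Fintype.card_bool, prod_const] at htotal
  rw [mul_comm 2 n]
  omega

lemma card_clauses_sat_add (u : Assignment n) :
    #{c : Clause n k | SatClause u c} + n ^ k = (2 * n) ^ k := by
  have h := card_clauses_sat_both_add (k := k) u u
  simp only [and_self, hammingDist_self, Nat.sub_zero] at h
  omega

lemma card_clauses_sat_both_div_card_clauses_sat (hn : 0 < n) (hk : 0 < k) (a v : Assignment n) :
    (#{c : Clause n k | SatClause a c ∧ SatClause v c} : ℝ) / #{c : Clause n k | SatClause a c}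
      = 1 - (1 - (1 - (hammingDist a v : ℝ) / n) ^ k) / (2 ^ k - 1) := by
  have hboth := card_clauses_sat_both_add (k := k) a v
  have hsat := card_clauses_sat_add (k := k) a
  have hdist : hammingDist a v ≤ n := by
    simpa using hammingDist_le_card_fintype (x := a) (y := v)
  have hn' : (n : ℝ) ≠ 0 := by positivity
  have h2k : (2 : ℝ) ^ k - 1 ≠ 0 := by
    have : (2 : ℝ) ≤ 2 ^ k := le_self_pow₀ one_le_two hk.ne'
    linarith
  rw [← Nat.cast_inj (R := ℝ)] at hboth hsat
  push_cast [Nat.cast_sub hdist] at hboth hsat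
  have hS : (#{c : Clause n k | SatClause a c} : ℝ) = (2 ^ k - 1) * n ^ k := by
    linear_combination hsat
  have hN : (#{c : Clause n k | SatClause a c ∧ SatClause v c} : ℝ)
      = (2 ^ k - 1) * n ^ k - (n ^ k - (n - hammingDist a v) ^ k) := by
    linear_combination hboth
  rw [hS, hN, one_sub_div hn', div_pow]
  field_simp

end Clauses

section Formulas

variable {n k m : ℕ}

lemma card_formulas_sat_both (a v : Assignment n) :
    #{φ : Formula n k m | SatFormula a φ ∧ SatFormula v φ}
      = #{c : Clause n k | SatClause a c ∧ SatClause v c} ^ m := by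
  have h := card_filter_forall_apply (ι := Fin m)
    fun c : Clause n k => SatClause a c ∧ SatClause v c
  rw [Fintype.card_fin] at h
  convert h using 3
  simp [SatFormula, forall_and]

lemma card_formulas_sat (a : Assignment n) :
    #{φ : Formula n k m | SatFormula a φ} = #{c : Clause n k | SatClause a c} ^ m := by
  simpa using card_formulas_sat_both (m := m) a a

end Formulas

theorem planted_expected_sat_count_general (n k m : ℕ) (hn : 0 < n) (hk : 0 < k)
    (a : Assignment n)
    (fcount : Formula n k m → ℕ)
    (hfcount : ∀ φ, fcount φ = ((univ : Finset (Assignment n)).filter fun v =>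
        SatFormula v φ).card) :
    let Pform : Finset (Formula n k m) := univ.filter fun φ => SatFormula a φ
    (∑ φ ∈ Pform, (fcount φ : ℝ)) / (Pform.card : ℝ)
      = ∑ i ∈ Finset.range (n + 1),
          (n.choose i : ℝ) * (1 - (1 - (1 - (i : ℝ) / n) ^ k) / (2 ^ k - 1)) ^ m := by
  intro Pform
  set g : ℕ → ℝ := fun i => (1 - (1 - (1 - (i : ℝ) / n) ^ k) / (2 ^ k - 1)) ^ m
  have hdouble : ∑ φ ∈ Pform, fcount φ
      = ∑ v, #{φ : Formula n k m | SatFormula a φ ∧ SatFormula v φ} := calc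
    _ = ∑ φ ∈ Pform, #(univ.bipartiteAbove (fun φ v => SatFormula v φ) φ) := by
      simp only [hfcount]; rfl
    _ = ∑ v, #(Pform.bipartiteBelow (fun φ v => SatFormula v φ) v) :=
      sum_card_bipartiteAbove_eq_sum_card_bipartiteBelow _
    _ = _ := by simp only [bipartiteBelow, Pform, filter_filter]
  calc (∑ φ ∈ Pform, (fcount φ : ℝ)) / (Pform.card : ℝ)
      = ∑ v : Assignment n, ((#{c : Clause n k | SatClause a c ∧ SatClause v c} : ℝ)
          / #{c : Clause n k | SatClause a c}) ^ m := by
        rw [← Nat.cast_sum, hdouble, Nat.cast_sum, sum_div]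
        simp only [Pform, card_formulas_sat, card_formulas_sat_both, Nat.cast_pow, div_pow]
    _ = ∑ v : Assignment n, g (hammingDist a v) := by
        refine sum_congr rfl fun v _ => ?_
        rw [card_clauses_sat_both_div_card_clauses_sat hn hk]
    _ = _ := by
        rw [sum_comp_hammingDist a g]
        simp only [Fintype.card_fin, nsmul_eq_mul, g]

/-- Let `f_count(φ)` be the number of satisfying assignments of `φ`.  For
every assignment `a`, the expectation of `f_count(φ)` for `φ` drawn from the planted
distribution `D_pa(m,n,k,a)` (uniform over formulas with `m` clauses all satisfied by `a`)
equals `Σ_{i=0}^n C(n,i)·(1 − (1 − (1 − i/n)^k)/(2^k − 1))^m`. -/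
theorem planted_expected_sat_count (n k m : ℕ) (hn : 0 < n) (hk : 0 < k) (hm : 0 < m)
    (a : Assignment n)
    (fcount : Formula n k m → ℕ)
    (hfcount : ∀ φ, fcount φ = ((univ : Finset (Assignment n)).filter fun v =>
        SatFormula v φ).card) :
    let Pform : Finset (Formula n k m) := univ.filter fun φ => SatFormula a φ
    (∑ φ ∈ Pform, (fcount φ : ℝ)) / (Pform.card : ℝ)
      = ∑ i ∈ Finset.range (n + 1),
          (n.choose i : ℝ) * (1 - (1 - (1 - (i : ℝ) / n) ^ k) / (2 ^ k - 1)) ^ m :=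
  planted_expected_sat_count_general n k m hn hk a fcount hfcount
end
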